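/- Let 𝒢 = (G_n,‖·‖_n)_{n∈ℕ} be a family of metric groups with sup_n sup_{g∈G_n} ‖g‖_n < ∞, and 𝒰 a nonprincipal ultrafilter on ℕ. Then the metric ultraproduct 𝒢*_met is a simple group if and only if 𝒢*_met is boundedly simple, i.e., for every g ∈ 𝒢*_met with g ≠ e there is N ∈ ℕ such that C_N(g,𝒢*_met) = 𝒢*_met. -/

import Mathlib

open Filter Set Pointwise ENNReal

/-- `CN N g` : the set of all products of at most `N` conjugates of `g` and `g⁻¹`. -/
def CN {H : Type*} [Group H] (N : ℕ) (g : H) : Set H :=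
  ⋃ m ≤ N, ({x | IsConj g x} ∪ {x | IsConj g⁻¹ x}) ^ m

/-- A family of groups equipped with conjugation-invariant pseudo-norms with values in `[0,∞]`. -/
structure PMFamily where
  G : ℕ → Type
  grp : ∀ n, Group (G n)
  ν : ∀ n, G n → ℝ≥0∞
  norm_one : ∀ n, ν n 1 = 0
  norm_mul : ∀ n (g h : G n), ν n (g * h) ≤ ν n g + ν n h
  norm_inv : ∀ n (g : G n), ν n g⁻¹ = ν n g
  norm_conj : ∀ n (g h : G n), ν n (h * g * h⁻¹) = ν n g

attribute [instance] PMFamily.grp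

namespace PMFamily

variable (𝒢 : PMFamily) (U : Ultrafilter ℕ)

/-- The subgroup of infinitesimal sequences. -/
def E : Subgroup (∀ n, 𝒢.G n) where
  carrier := {g | ∀ ε : ℝ≥0∞, 0 < ε → {n | 𝒢.ν n (g n) < ε} ∈ U}
  one_mem' := by
    intro ε hε
    have h : {n | 𝒢.ν n ((1 : ∀ n, 𝒢.G n) n) < ε} = Set.univ := by
      ext n; simpa [𝒢.norm_one n] using hε
    show {n | 𝒢.ν n ((1 : ∀ n, 𝒢.G n) n) < ε} ∈ U
    rw [h]
    exact Filter.univ_mem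
  mul_mem' := by
    intro g h hg hh ε hε
    have h2 : (0 : ℝ≥0∞) < ε / 2 := ENNReal.half_pos hε.ne'
    have key : {n | 𝒢.ν n (g n) < ε / 2} ∩ {n | 𝒢.ν n (h n) < ε / 2} ⊆
        {n | 𝒢.ν n ((g * h) n) < ε} := by
      rintro n ⟨h1, h1'⟩
      simp only [Set.mem_setOf_eq] at h1 h1' ⊢
      calc 𝒢.ν n ((g * h) n) = 𝒢.ν n (g n * h n) := rfl
        _ ≤ 𝒢.ν n (g n) + 𝒢.ν n (h n) := 𝒢.norm_mul n _ _
        _ < ε / 2 + ε / 2 := ENNReal.add_lt_add h1 h1'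
        _ = ε := ENNReal.add_halves ε
    exact Filter.mem_of_superset (Filter.inter_mem (hg _ h2) (hh _ h2)) key
  inv_mem' := by
    intro g hg ε hε
    have h : {n | 𝒢.ν n (g⁻¹ n) < ε} = {n | 𝒢.ν n (g n) < ε} := by
      ext n; simp only [Set.mem_setOf_eq, Pi.inv_apply, 𝒢.norm_inv n]
    show {n | 𝒢.ν n (g⁻¹ n) < ε} ∈ U
    rw [h]
    exact hg ε hε

theorem mem_E {g : ∀ n, 𝒢.G n} :
    g ∈ 𝒢.E U ↔ ∀ ε : ℝ≥0∞, 0 < ε → {n | 𝒢.ν n (g n) < ε} ∈ U := Iff.rfl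

instance normal_E : (𝒢.E U).Normal := by
  constructor
  intro g hg h
  rw [mem_E] at hg ⊢
  intro ε hε
  have heq : {n | 𝒢.ν n ((h * g * h⁻¹) n) < ε} = {n | 𝒢.ν n (g n) < ε} := by
    ext n
    simp only [Set.mem_setOf_eq, Pi.mul_apply, Pi.inv_apply, 𝒢.norm_conj n]
  rw [heq]
  exact hg ε hε

/-- The metric ultraproduct. -/
abbrev Q := (∀ n, 𝒢.G n) ⧸ 𝒢.E U

/-- The limit of the norms along the ultrafilter, on the product group. -/
noncomputable def pnorm (g : ∀ n, 𝒢.G n) : ℝ≥0∞ :=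
  Filter.limsup (fun n => 𝒢.ν n (g n)) U

/-- The induced norm on the metric ultraproduct. -/
noncomputable def qnorm (x : 𝒢.Q U) : ℝ≥0∞ := 𝒢.pnorm U (Quotient.out x)

/-- The open ball of radius `ε` around the identity in the metric ultraproduct. -/
def ball (ε : ℝ≥0∞) : Set (𝒢.Q U) := {x | 𝒢.qnorm U x < ε}

/-- Metrically internal subsets of the metric ultraproduct. -/
def internalSet (Xn : ∀ n, Set (𝒢.G n)) : Set (𝒢.Q U) :=
  (QuotientGroup.mk : (∀ n, 𝒢.G n) → 𝒢.Q U) '' {g | ∀ n, g n ∈ Xn n}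

/-- The finitary subgroup of the metric ultraproduct: classes of uniformly bounded
sequences (equivalently, elements of finite norm). -/
def finSubgroup : Subgroup (𝒢.Q U) where
  carrier := {x | ∃ g : ∀ n, 𝒢.G n, QuotientGroup.mk g = x ∧
    ∃ C : ℝ≥0∞, C ≠ ⊤ ∧ ∀ n, 𝒢.ν n (g n) ≤ C}
  one_mem' := ⟨1, rfl, 0, by simp, fun n => by simp [𝒢.norm_one n]⟩
  mul_mem' := by
    rintro x y ⟨g, rfl, C, hC, hg⟩ ⟨h, rfl, D, hD, hh⟩
    refine ⟨g * h, rfl, C + D, ENNReal.add_ne_top.mpr ⟨hC, hD⟩, fun n => ?_⟩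
    exact le_trans (𝒢.norm_mul n (g n) (h n)) (add_le_add (hg n) (hh n))
  inv_mem' := by
    rintro x ⟨g, rfl, C, hC, hg⟩
    exact ⟨g⁻¹, rfl, C, hC, fun n => by rw [Pi.inv_apply, 𝒢.norm_inv n]; exact hg n⟩

end PMFamily

/-! Simplicity says that the normal closure `⋃ N, CN N g` of every `g ≠ 1` is the whole
group, so only "simple → boundedly simple" needs work. Each `CN N g` is an internal set of the
ultraproduct, hence closed for the complete metric of the ultraproduct, and Baire's theorem
gives a ball `B(1, ε) ⊆ CN M g`. If no `CN N g` were everything, an element outside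
`CN (N + M) g` would be `ε`-far from `CN N g` for every `N`; a diagonal sequence along the
nonprincipal ultrafilter (countable saturation) then produces an element far from every
`CN N g`, contradicting the cover. -/

section CN

variable {G H : Type*} [Group G] [Group H]

theorem IsConj.inv {a b : G} (h : IsConj a b) : IsConj a⁻¹ b⁻¹ := by
  obtain ⟨c, rfl⟩ := isConj_iff.1 h
  exact isConj_iff.2 ⟨c, by group⟩

theorem mem_CN_one {g x : G} : x ∈ CN 1 g ↔ x = 1 ∨ IsConj g x ∨ IsConj g⁻¹ x := by
  simp [CN, Nat.le_one_iff_eq_zero_or_eq_one]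

theorem CN_eq_pow (N : ℕ) (g : G) : CN N g = CN 1 g ^ N := by
  have hS : {x | IsConj g x} ∪ {x | IsConj g⁻¹ x} ⊆ CN 1 g := fun x hx =>
    mem_CN_one.2 (Or.inr hx)
  have h1 : (1 : G) ∈ CN 1 g := mem_CN_one.2 (Or.inl rfl)
  refine Set.Subset.antisymm (Set.iUnion₂_subset fun m hm => Set.pow_subset_pow hS h1 hm) ?_
  induction N with
  | zero => exact Set.subset_iUnion₂_of_subset 0 le_rfl le_rfl
  | succ N ih =>
    intro x hx
    rw [pow_succ] at hx
    obtain ⟨a, ha, b, hb, rfl⟩ := hx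
    obtain ⟨m, hm, ha⟩ := Set.mem_iUnion₂.1 (ih ha)
    rcases mem_CN_one.1 hb with rfl | hb
    · exact Set.mem_iUnion₂.2 ⟨m, hm.trans N.le_succ, by simpa using ha⟩
    · exact Set.mem_iUnion₂.2 ⟨m + 1, by omega, by rw [pow_succ]; exact Set.mul_mem_mul ha hb⟩

theorem one_mem_CN (N : ℕ) (g : G) : (1 : G) ∈ CN N g := by
  rw [CN_eq_pow N]; exact Set.one_mem_pow (mem_CN_one.2 (Or.inl rfl))

theorem CN_mono {M N : ℕ} (h : M ≤ N) (g : G) : CN M g ⊆ CN N g := by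
  rw [CN_eq_pow M, CN_eq_pow N]; exact Set.pow_subset_pow_right (one_mem_CN 1 g) h

theorem mul_mem_CN {M N : ℕ} {g x y : G} (hx : x ∈ CN M g) (hy : y ∈ CN N g) :
    x * y ∈ CN (M + N) g := by
  rw [CN_eq_pow M] at hx
  rw [CN_eq_pow N] at hy
  rw [CN_eq_pow, pow_add]
  exact Set.mul_mem_mul hx hy

theorem inv_CN_one (g : G) : (CN 1 g)⁻¹ = CN 1 g := by
  ext x
  simp only [Set.mem_inv, mem_CN_one, inv_eq_one]
  refine or_congr_right ⟨fun h => h.symm.imp ?_ ?_, fun h => h.symm.imp ?_ ?_⟩ <;>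
    intro h <;> simpa using h.inv

theorem inv_mem_CN {N : ℕ} {g x : G} (hx : x ∈ CN N g) : x⁻¹ ∈ CN N g := by
  rw [CN_eq_pow N] at hx ⊢
  rw [← Set.mem_inv, ← inv_pow, inv_CN_one]; exact hx

theorem image_CN_one_subset (f : G →* H) (g : G) : f '' CN 1 g ⊆ CN 1 (f g) := by
  rintro _ ⟨x, hx, rfl⟩
  rcases mem_CN_one.1 hx with rfl | hx | hx
  · exact mem_CN_one.2 (Or.inl (map_one f))
  · exact mem_CN_one.2 (Or.inr (Or.inl (f.map_isConj hx)))
  · exact mem_CN_one.2 (Or.inr (Or.inr (by simpa using f.map_isConj hx)))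

theorem image_CN_one_of_surjective (f : G →* H) (hf : Function.Surjective f) (g : G) :
    f '' CN 1 g = CN 1 (f g) := by
  refine (image_CN_one_subset f g).antisymm fun y hy => ?_
  have lift : ∀ a : G, IsConj (f a) y → ∃ x, IsConj a x ∧ f x = y := by
    intro a ha
    obtain ⟨c, rfl⟩ := isConj_iff.1 ha
    obtain ⟨c, rfl⟩ := hf c
    exact ⟨c * a * c⁻¹, isConj_iff.2 ⟨c, rfl⟩, by simp⟩
  rcases mem_CN_one.1 hy with rfl | hy | hy
  · exact ⟨1, one_mem_CN 1 g, map_one f⟩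
  · obtain ⟨x, hx, rfl⟩ := lift g hy
    exact ⟨x, mem_CN_one.2 (Or.inr (Or.inl hx)), rfl⟩
  · obtain ⟨x, hx, rfl⟩ := lift g⁻¹ (by simpa using hy)
    exact ⟨x, mem_CN_one.2 (Or.inr (Or.inr hx)), rfl⟩

theorem image_CN_subset (f : G →* H) (N : ℕ) (g : G) : f '' CN N g ⊆ CN N (f g) := by
  rw [CN_eq_pow N, CN_eq_pow N, Set.image_pow]
  exact Set.pow_subset_pow_left (image_CN_one_subset f g)

theorem image_CN_of_surjective (f : G →* H) (hf : Function.Surjective f) (N : ℕ) (g : G) :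
    f '' CN N g = CN N (f g) := by
  rw [CN_eq_pow N, CN_eq_pow N, Set.image_pow, image_CN_one_of_surjective f hf]

theorem coe_normalClosure_singleton (g : G) :
    (Subgroup.normalClosure {g} : Set G) = ⋃ N, CN N g := by
  refine Set.Subset.antisymm (fun x hx => ?_) (Set.iUnion_subset fun N => ?_)
  · induction hx using Subgroup.closure_induction with
    | mem x hx =>
      obtain ⟨a, ha, hax⟩ := Group.mem_conjugatesOfSet_iff.1 hx
      rw [Set.mem_singleton_iff] at ha
      exact Set.mem_iUnion.2 ⟨1, mem_CN_one.2 (Or.inr (Or.inl (ha ▸ hax)))⟩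
    | one => exact Set.mem_iUnion.2 ⟨0, one_mem_CN 0 g⟩
    | mul x y _ _ hx hy =>
      obtain ⟨M, hx⟩ := Set.mem_iUnion.1 hx
      obtain ⟨N, hy⟩ := Set.mem_iUnion.1 hy
      exact Set.mem_iUnion.2 ⟨M + N, mul_mem_CN hx hy⟩
    | inv x _ hx =>
      obtain ⟨N, hx⟩ := Set.mem_iUnion.1 hx
      exact Set.mem_iUnion.2 ⟨N, inv_mem_CN hx⟩
  · rw [CN_eq_pow N]
    refine Subgroup.pow_subset fun x hx => ?_
    have hconj : ∀ y, IsConj g y → y ∈ Subgroup.normalClosure {g} := fun y hy =>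
      Subgroup.conjugatesOfSet_subset_normalClosure (Group.mem_conjugatesOfSet_iff.2 ⟨g, rfl, hy⟩)
    rcases mem_CN_one.1 hx with rfl | hx | hx
    · exact one_mem _
    · exact hconj x hx
    · exact inv_mem_iff.1 (hconj x⁻¹ (by simpa using hx.inv))

theorem forall_normal_eq_bot_or_top_iff :
    (∀ K : Subgroup G, K.Normal → K = ⊥ ∨ K = ⊤) ↔
      ∀ g : G, g ≠ 1 → Subgroup.normalClosure {g} = ⊤ := by
  refine ⟨fun h g hg => (h _ Subgroup.normalClosure_normal).resolve_left fun hbot => hg ?_,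
    fun h K hK => or_iff_not_imp_left.2 fun hbot => ?_⟩
  · simpa [hbot] using Subgroup.subset_normalClosure (s := {g}) rfl
  · obtain ⟨⟨g, hgK⟩, hg⟩ := (Subgroup.ne_bot_iff_exists_ne_one).1 hbot
    rw [eq_top_iff, ← h g (by simpa using hg)]
    exact Subgroup.normalClosure_le_normal (Set.singleton_subset_iff.2 hgK)

end CN

section Filter

open Topology

theorem ENNReal.tendsto_limsup_ultrafilter {α : Type*} (U : Ultrafilter α) (u : α → ℝ≥0∞) :
    Tendsto u U (𝓝 (limsup u U)) := by
  obtain ⟨x, -, hx⟩ := isCompact_univ.ultrafilter_le_nhds (U.map u) (by simp)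
  have hu : Tendsto u U (𝓝 x) := hx
  rwa [hu.limsup_eq]

theorem Filter.exists_diagonal_of_le_atTop {l : Filter ℕ} (hl : l ≤ atTop) {P : ℕ → ℕ → Prop}
    (hP : ∀ N, ∀ᶠ n in l, P N n) : ∃ m : ℕ → ℕ, ∀ N, ∀ᶠ n in l, N ≤ m n ∧ P (m n) n := by
  classical
  refine ⟨fun n => Nat.findGreatest (P · n) n, fun N => ?_⟩
  filter_upwards [hP N, hl (eventually_ge_atTop N)] with n hn hNn
  exact ⟨Nat.le_findGreatest hNn hn, Nat.findGreatest_spec (P := (P · n)) hNn hn⟩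

end Filter

namespace PMFamily

open Topology

variable {𝒢 : PMFamily} {U : Ultrafilter ℕ}

theorem pnorm_mul_le (g h : ∀ n, 𝒢.G n) : 𝒢.pnorm U (g * h) ≤ 𝒢.pnorm U g + 𝒢.pnorm U h :=
  (limsup_le_limsup (.of_forall fun n => 𝒢.norm_mul n (g n) (h n))).trans
    ((ENNReal.tendsto_limsup_ultrafilter U _).add
      (ENNReal.tendsto_limsup_ultrafilter U _)).limsup_eq.le

theorem pnorm_inv (g : ∀ n, 𝒢.G n) : 𝒢.pnorm U g⁻¹ = 𝒢.pnorm U g := by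
  simp only [pnorm, Pi.inv_apply, 𝒢.norm_inv]

theorem pnorm_eq_zero_iff {g : ∀ n, 𝒢.G n} : 𝒢.pnorm U g = 0 ↔ g ∈ 𝒢.E U := by
  refine ⟨fun h ε hε => eventually_lt_of_limsup_lt (show 𝒢.pnorm U g < ε by rwa [h]), fun h => ?_⟩
  refine nonpos_iff_eq_zero.1 (le_of_forall_gt_imp_ge_of_dense fun ε hε => ?_)
  exact limsup_le_of_le (by isBoundedDefault) (mem_of_superset (h ε hε) fun n (hn : _ < ε) => hn.le)

theorem pnorm_le_of_mk_eq {a b : ∀ n, 𝒢.G n} (h : (a : 𝒢.Q U) = b) :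
    𝒢.pnorm U b ≤ 𝒢.pnorm U a := by
  calc 𝒢.pnorm U b = 𝒢.pnorm U (a * (a⁻¹ * b)) := by rw [mul_inv_cancel_left]
    _ ≤ 𝒢.pnorm U a + 𝒢.pnorm U (a⁻¹ * b) := pnorm_mul_le _ _
    _ = 𝒢.pnorm U a := by rw [pnorm_eq_zero_iff.2 (QuotientGroup.eq.1 h), add_zero]

theorem qnorm_mk (g : ∀ n, 𝒢.G n) : 𝒢.qnorm U g = 𝒢.pnorm U g :=
  (pnorm_le_of_mk_eq (Quotient.out_eq _).symm).antisymm (pnorm_le_of_mk_eq (Quotient.out_eq _))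

theorem qnorm_inv (x : 𝒢.Q U) : 𝒢.qnorm U x⁻¹ = 𝒢.qnorm U x := by
  induction x using QuotientGroup.induction_on with
  | H a => exact (qnorm_mk a⁻¹).trans ((pnorm_inv a).trans (qnorm_mk a).symm)

theorem qnorm_mul_le (x y : 𝒢.Q U) : 𝒢.qnorm U (x * y) ≤ 𝒢.qnorm U x + 𝒢.qnorm U y := by
  induction x using QuotientGroup.induction_on with | H a =>
  induction y using QuotientGroup.induction_on with | H b =>
  rw [qnorm_mk a, qnorm_mk b]
  exact (qnorm_mk (a * b)).trans_le (pnorm_mul_le a b)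

theorem qnorm_eq_zero_iff {x : 𝒢.Q U} : 𝒢.qnorm U x = 0 ↔ x = 1 := by
  induction x using QuotientGroup.induction_on with
  | H a => rw [qnorm_mk, pnorm_eq_zero_iff, QuotientGroup.eq_one_iff]

noncomputable instance : EMetricSpace (𝒢.Q U) where
  edist x y := 𝒢.qnorm U (x⁻¹ * y)
  edist_self x := by rw [inv_mul_cancel, qnorm_eq_zero_iff]
  edist_comm x y := by rw [← qnorm_inv, mul_inv_rev, inv_inv]
  edist_triangle x y z := by
    simpa only [mul_assoc, mul_inv_cancel_left] using qnorm_mul_le (x⁻¹ * y) (y⁻¹ * z)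
  eq_of_edist_eq_zero h := inv_mul_eq_one.1 (qnorm_eq_zero_iff.1 h)

theorem edist_mk_mk (a b : ∀ n, 𝒢.G n) :
    edist (a : 𝒢.Q U) b = limsup (fun n => 𝒢.ν n ((a n)⁻¹ * b n)) U :=
  qnorm_mk (a⁻¹ * b)

instance : IsIsometricSMul (𝒢.Q U) (𝒢.Q U) where
  isometry_smul x a b := by
    change 𝒢.qnorm U ((x * a)⁻¹ * (x * b)) = 𝒢.qnorm U (a⁻¹ * b)
    rw [mul_inv_rev, mul_assoc, inv_mul_cancel_left]

theorem mk_eq_mk_of_eventuallyEq {a b : ∀ n, 𝒢.G n} (h : ∀ᶠ n in U, a n = b n) :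
    (a : 𝒢.Q U) = b :=
  QuotientGroup.eq.2 fun ε hε => h.mono fun n hn => by simp [hn, 𝒢.norm_one, hε]

theorem isConj_mk_of_eventually {a b : ∀ n, 𝒢.G n} (h : ∀ᶠ n in U, IsConj (a n) (b n)) :
    IsConj (a : 𝒢.Q U) b := by
  obtain ⟨c, hc⟩ := skolem.1 (h.mono fun n hn => isConj_iff.1 hn)
  exact isConj_iff.2 ⟨c, mk_eq_mk_of_eventuallyEq hc⟩

theorem mk_mem_CN_one {g b : ∀ n, 𝒢.G n} (h : ∀ n, b n ∈ CN 1 (g n)) :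
    (b : 𝒢.Q U) ∈ CN 1 (g : 𝒢.Q U) := by
  have hb : ∀ᶠ n in U, b n = 1 ∨ IsConj (g n) (b n) ∨ IsConj (g n)⁻¹ (b n) :=
    .of_forall fun n => mem_CN_one.1 (h n)
  refine mem_CN_one.2 ?_
  rcases Ultrafilter.eventually_or.1 hb with hb | hb
  · exact Or.inl (mk_eq_mk_of_eventuallyEq (b := 1) hb)
  rcases Ultrafilter.eventually_or.1 hb with hb | hb
  · exact Or.inr (Or.inl (isConj_mk_of_eventually hb))
  · exact Or.inr (Or.inr (isConj_mk_of_eventually (a := g⁻¹) hb))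

theorem CN_mk (N : ℕ) (g : ∀ n, 𝒢.G n) :
    CN N (g : 𝒢.Q U) = 𝒢.internalSet U fun n => CN N (g n) := by
  refine Set.Subset.antisymm ?_ ?_
  · rintro _ hx
    rw [← QuotientGroup.mk'_apply,
      ← image_CN_of_surjective _ (QuotientGroup.mk'_surjective (𝒢.E U))] at hx
    obtain ⟨k, hk, rfl⟩ := hx
    exact ⟨k, fun n => image_CN_subset (Pi.evalMonoidHom 𝒢.G n) N g ⟨k, hk, rfl⟩, rfl⟩
  · rintro _ ⟨k, hk, rfl⟩
    simp only [CN_eq_pow N] at hk ⊢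
    induction N generalizing k with
    | zero =>
      simp only [pow_zero, Set.mem_one] at hk ⊢
      exact mk_eq_mk_of_eventuallyEq (b := 1) (.of_forall hk)
    | succ N ih =>
      simp only [pow_succ, Set.mem_mul] at hk ⊢
      choose a ha b hb hab using hk
      exact ⟨a, ih a ha, b, mk_mem_CN_one hb, by rw [← funext hab]; rfl⟩

theorem completeSpace (hU : (U : Filter ℕ) ≤ cofinite) : CompleteSpace (𝒢.Q U) := by
  refine EMetric.complete_of_convergent_controlled_sequences (fun N => (N : ℝ≥0∞)⁻¹)
    (fun N => ENNReal.inv_pos.2 (ENNReal.natCast_ne_top N)) fun u hu => ?_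
  choose h hh using fun k => QuotientGroup.mk_surjective (u k)
  have hclose : ∀ M, ∀ᶠ n in U, ∀ N ∈ Set.Iic M, 𝒢.ν n ((h N n)⁻¹ * h M n) < (N : ℝ≥0∞)⁻¹ :=
    fun M => (eventually_all_finite (Set.finite_Iic M)).2 fun N hN =>
      eventually_lt_of_limsup_lt (by rw [← edist_mk_mk, hh, hh]; exact hu N N M le_rfl hN)
  obtain ⟨m, hm⟩ := exists_diagonal_of_le_atTop (hU.trans Nat.cofinite_eq_atTop.le) hclose
  refine ⟨(fun n => h (m n) n : ∀ n, 𝒢.G n), EMetric.tendsto_atTop.2 fun ε hε => ?_⟩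
  obtain ⟨N, hN⟩ := ENNReal.exists_inv_nat_lt hε.ne'
  refine ⟨N, fun k hk => ?_⟩
  rw [← hh k, edist_mk_mk]
  calc limsup (fun n => 𝒢.ν n ((h k n)⁻¹ * h (m n) n)) U ≤ (k : ℝ≥0∞)⁻¹ :=
        limsup_le_of_le (by isBoundedDefault) ((hm k).mono fun n hn => (hn.2 k hn.1).le)
    _ ≤ (N : ℝ≥0∞)⁻¹ := ENNReal.inv_le_inv.2 (by exact_mod_cast hk)
    _ < ε := hN

noncomputable def infDist (𝒢 : PMFamily) (n : ℕ) (s : Set (𝒢.G n)) (x : 𝒢.G n) : ℝ≥0∞ :=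
  ⨅ d ∈ s, 𝒢.ν n (d⁻¹ * x)

theorem infDist_le {n : ℕ} {s : Set (𝒢.G n)} {d : 𝒢.G n} (hd : d ∈ s) (x : 𝒢.G n) :
    𝒢.infDist n s x ≤ 𝒢.ν n (d⁻¹ * x) :=
  biInf_le _ hd

theorem infDist_anti {n : ℕ} {s t : Set (𝒢.G n)} (hst : s ⊆ t) (x : 𝒢.G n) :
    𝒢.infDist n t x ≤ 𝒢.infDist n s x :=
  biInf_mono hst

theorem exists_le_infDist_add {n : ℕ} {s : Set (𝒢.G n)} (hs : s.Nonempty) (x : 𝒢.G n)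
    {ε : ℝ≥0∞} (hε : ε ≠ 0) : ∃ d ∈ s, 𝒢.ν n (d⁻¹ * x) ≤ 𝒢.infDist n s x + ε := by
  by_cases htop : 𝒢.infDist n s x = ⊤
  · obtain ⟨d, hd⟩ := hs
    exact ⟨d, hd, by simp [htop]⟩
  · obtain ⟨d, hd⟩ := iInf_lt_iff.1 (ENNReal.lt_add_right htop hε)
    obtain ⟨hds, hlt⟩ := iInf_lt_iff.1 hd
    exact ⟨d, hds, hlt.le⟩

section InternalSet

variable {X : ∀ n, Set (𝒢.G n)}

theorem limsup_infDist_le_edist {z : 𝒢.Q U} (hz : z ∈ 𝒢.internalSet U X) (h : ∀ n, 𝒢.G n) :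
    limsup (fun n => 𝒢.infDist n (X n) (h n)) U ≤ edist z h := by
  obtain ⟨k, hk, rfl⟩ := hz
  rw [edist_mk_mk]
  exact limsup_le_limsup (.of_forall fun n => infDist_le (hk n) (h n))

theorem exists_edist_le_limsup_infDist (hU : (U : Filter ℕ) ≤ cofinite)
    (hX : ∀ n, (X n).Nonempty) (h : ∀ n, 𝒢.G n) :
    ∃ z ∈ 𝒢.internalSet U X, edist z h ≤ limsup (fun n => 𝒢.infDist n (X n) (h n)) U := by
  choose d hd hdh using fun n =>
    exists_le_infDist_add (hX n) (h n) (ENNReal.inv_ne_zero.2 (ENNReal.natCast_ne_top n))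
  refine ⟨d, ⟨d, hd, rfl⟩, ?_⟩
  rw [edist_mk_mk]
  refine (limsup_le_limsup (.of_forall hdh)).trans_eq ?_
  exact ENNReal.limsup_add_of_right_tendsto_zero
    (ENNReal.tendsto_inv_nat_nhds_zero.mono_left (hU.trans Nat.cofinite_eq_atTop.le)) _

theorem isClosed_internalSet (hU : (U : Filter ℕ) ≤ cofinite) (hX : ∀ n, (X n).Nonempty) :
    IsClosed (𝒢.internalSet U X) := by
  refine isClosed_of_closure_subset fun x hx => ?_
  obtain ⟨h, rfl⟩ := QuotientGroup.mk_surjective x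
  have hzero : limsup (fun n => 𝒢.infDist n (X n) (h n)) U ≤ 0 :=
    le_of_forall_gt_imp_ge_of_dense fun ε hε => by
      obtain ⟨z, hz, hzε⟩ := EMetric.mem_closure_iff.1 hx ε hε
      rw [edist_comm] at hzε
      exact (limsup_infDist_le_edist hz h).trans hzε.le
  obtain ⟨z, hz, hzh⟩ := exists_edist_le_limsup_infDist hU hX h
  have hzx : z = h := edist_eq_zero.1 (nonpos_iff_eq_zero.1 (hzh.trans hzero))
  exact hzx ▸ hz

theorem eventually_lt_infDist (hU : (U : Filter ℕ) ≤ cofinite) (hX : ∀ n, (X n).Nonempty)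
    {h : ∀ n, 𝒢.G n} {δ ε : ℝ≥0∞} (hδε : δ < ε)
    (hfar : ∀ z ∈ 𝒢.internalSet U X, ε ≤ edist z h) :
    ∀ᶠ n in U, δ < 𝒢.infDist n (X n) (h n) := by
  obtain ⟨z, hz, hzh⟩ := exists_edist_le_limsup_infDist hU hX h
  exact Ultrafilter.frequently_iff_eventually.1
    (frequently_lt_of_lt_limsup (by isBoundedDefault) (hδε.trans_le ((hfar z hz).trans hzh)))

end InternalSet

theorem exists_forall_notMem_internalSet (hU : (U : Filter ℕ) ≤ cofinite)
    (X : ℕ → ∀ n, Set (𝒢.G n)) (hX : ∀ n, Monotone (X · n)) {δ : ℝ≥0∞} (hδ : 0 < δ)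
    (hfar : ∀ N, ∃ h : ∀ n, 𝒢.G n, ∀ᶠ n in U, δ < 𝒢.infDist n (X N n) (h n)) :
    ∃ w : 𝒢.Q U, ∀ N, w ∉ 𝒢.internalSet U (X N) := by
  choose h hh using hfar
  obtain ⟨m, hm⟩ := exists_diagonal_of_le_atTop (hU.trans Nat.cofinite_eq_atTop.le) hh
  refine ⟨(fun n => h (m n) n : ∀ n, 𝒢.G n), fun N hw => ?_⟩
  have hnear := eventually_lt_of_limsup_lt
    (((limsup_infDist_le_edist hw _).trans_eq (edist_self _)).trans_lt hδ)
  obtain ⟨n, hnear, hNm, hfar⟩ := (hnear.and (hm N)).exists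
  exact hnear.not_gt (hfar.trans_le (infDist_anti (hX n hNm) _))

theorem exists_eball_one_subset_CN (hU : (U : Filter ℕ) ≤ cofinite) (g : 𝒢.Q U)
    (hcover : ⋃ N, CN N g = Set.univ) :
    ∃ M, ∃ ε > 0, ∀ b : 𝒢.Q U, edist 1 b < ε → b ∈ CN M g := by
  obtain ⟨g, rfl⟩ := QuotientGroup.mk_surjective g
  have := completeSpace (𝒢 := 𝒢) hU
  have hclosed : ∀ N, IsClosed (CN N (g : 𝒢.Q U)) := fun N => by
    rw [CN_mk]
    exact isClosed_internalSet hU fun n => ⟨1, one_mem_CN N (g n)⟩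
  obtain ⟨N, x, hx⟩ := nonempty_interior_of_iUnion_of_closed hclosed hcover
  obtain ⟨ε, hε, hball⟩ := EMetric.mem_nhds_iff.1 (mem_interior_iff_mem_nhds.1 hx)
  have hxb : ∀ b : 𝒢.Q U, edist 1 b < ε → x * b ∈ CN N (g : 𝒢.Q U) := fun b hb =>
    hball (Metric.mem_eball.2 (by rw [edist_comm]; simpa using (edist_mul_left x 1 b).trans_lt hb))
  refine ⟨N + N, ε, hε, fun b hb => ?_⟩
  simpa using mul_mem_CN (inv_mem_CN (hxb 1 (by simpa using hε))) (hxb b hb)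

theorem exists_CN_eq_univ (hU : (U : Filter ℕ) ≤ cofinite) (g : 𝒢.Q U)
    (hcover : ⋃ N, CN N g = Set.univ) : ∃ N, CN N g = Set.univ := by
  obtain ⟨M, ε, hε, hball⟩ := exists_eball_one_subset_CN hU g hcover
  obtain ⟨δ, hδ, hδε⟩ := exists_between hε
  obtain ⟨g, rfl⟩ := QuotientGroup.mk_surjective g
  by_contra! hproper
  have hfar : ∀ N, ∃ h : ∀ n, 𝒢.G n, ∀ᶠ n in U, δ < 𝒢.infDist n (CN N (g n)) (h n) := by
    intro N
    obtain ⟨y, hy⟩ := (Set.ne_univ_iff_exists_notMem _).1 (hproper (N + M))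
    obtain ⟨h, rfl⟩ := QuotientGroup.mk_surjective y
    refine ⟨h, eventually_lt_infDist hU (fun n => ⟨1, one_mem_CN N (g n)⟩) hδε fun z hz => ?_⟩
    rw [← CN_mk] at hz
    refine not_lt.1 fun hzh => hy ?_
    have hsmall : edist 1 (z⁻¹ * h) < ε := by
      rwa [← edist_mul_left z, mul_one, mul_inv_cancel_left]
    simpa using mul_mem_CN hz (hball _ hsmall)
  obtain ⟨w, hw⟩ := exists_forall_notMem_internalSet hU (fun N n => CN N (g n))
    (fun n _ _ hNM => CN_mono hNM (g n)) hδ hfar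
  obtain ⟨N, hN⟩ := Set.mem_iUnion.1 (hcover ▸ Set.mem_univ w)
  exact hw N (CN_mk N g ▸ hN)

end PMFamily

theorem statement7_general (𝒢 : PMFamily)
    (U : Ultrafilter ℕ) (hU : (U : Filter ℕ) ≤ Filter.cofinite) :
    (∀ H : Subgroup (𝒢.Q U), H.Normal → H = ⊥ ∨ H = ⊤) ↔
      (∀ g : 𝒢.Q U, g ≠ 1 → ∃ N : ℕ, CN N g = Set.univ) := by
  rw [forall_normal_eq_bot_or_top_iff]
  refine forall₂_congr fun g _ => ?_
  rw [← SetLike.coe_set_eq, Subgroup.coe_top, coe_normalClosure_singleton]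
  exact ⟨PMFamily.exists_CN_eq_univ hU g,
    fun ⟨N, hN⟩ => Set.eq_univ_of_subset (Set.subset_iUnion _ N) hN⟩

/-- simplicity versus bounded simplicity, bounded case. If the norms are
uniformly bounded, then the metric ultraproduct is simple (has no normal subgroups other than
`⊥` and `⊤`) if and only if it is boundedly simple: for every `g ≠ 1` there is `N` with
`C_N(g) = ` the whole group. -/
theorem statement7 (𝒢 : PMFamily)
    (hmetric : ∀ n (g : 𝒢.G n), 𝒢.ν n g = 0 ↔ g = 1)
    (U : Ultrafilter ℕ) (hU : (U : Filter ℕ) ≤ Filter.cofinite)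
    (hbdd : ∃ C : ℝ≥0∞, C ≠ ⊤ ∧ ∀ n (g : 𝒢.G n), 𝒢.ν n g ≤ C) :
    (∀ H : Subgroup (𝒢.Q U), H.Normal → H = ⊥ ∨ H = ⊤) ↔
      (∀ g : 𝒢.Q U, g ≠ 1 → ∃ N : ℕ, CN N g = Set.univ) :=
  statement7_general 𝒢 U hU
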